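/- arXiv:2210.08070 — 2 statements merged into one kernel-verified Lean document; each statement's English description precedes it below -/
import Mathlib

section
/- Maximality principle: let ⟨A, N⟩ be a complete C_ω-structure whose underlying complete Heyting algebra A is refinable, and let ‖·‖ be a Leibniz truth-value interpretation on the A-names. If ‖∃x ψ(x)‖ = 1 for a formula ψ(x) with one free variable, then there exists an A-name u such that ‖ψ(u)‖ = 1. -/
universe u

/-- The universe `V^A` of `A`-names over a complete Heyting algebra `A`:
an `A`-name is a function from a set (of previously constructed `A`-names)
into `A`, here encoded by an indexing type `ι`, a family `elts` of names and
the family `val` of their attached truth values. -/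
inductive HName (A : Type u) : Type (u + 1) where
  | mk (ι : Type u) (elts : ι → HName A) (val : ι → A)

namespace HName

variable {A : Type u}

/-- The indexing type of (the domain of) a name. -/
def ι : HName A → Type u
  | mk ι _ _ => ι

/-- The members of (the domain of) a name. -/
def elts : (u : HName A) → u.ι → HName A
  | mk _ e _ => e

/-- The values attached by a name to the members of its domain. -/
def val : (u : HName A) → u.ι → A
  | mk _ _ v => v

/-- Ordinal rank of a name (used for the recursive definition of truth values). -/
noncomputable def rank : HName A → Ordinal.{u}
  | mk _ e _ => Ordinal.lsub fun i => (e i).rank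

theorem rank_lt {ι : Type u} (e : ι → HName A) (v : ι → A) (i : ι) :
    (e i).rank < (mk ι e v).rank := Ordinal.lt_lsub _ i

variable [Order.Frame A]

/-- The truth value `‖u ≈ v‖` of equality of two names, defined by the recursion
`‖u ≈ v‖ = ⨅_{x ∈ dom u} (u(x) ⇨ ‖x ∈ v‖) ⊓ ⨅_{y ∈ dom v} (v(y) ⇨ ‖y ∈ u‖)`,
where `‖x ∈ v‖ = ⨆_{y ∈ dom v} (v(y) ⊓ ‖y ≈ x‖)` is inlined. -/
noncomputable def eqVal : HName A → HName A → A
  | mk ι e a, mk κ f b =>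
      (⨅ i, a i ⇨ ⨆ j, b j ⊓ eqVal (f j) (e i)) ⊓
      (⨅ j, b j ⇨ ⨆ i, a i ⊓ eqVal (e i) (f j))
termination_by u v => max u.rank v.rank
decreasing_by
  · exact max_lt (lt_max_of_lt_right (rank_lt f b j)) (lt_max_of_lt_left (rank_lt e a i))
  · exact max_lt (lt_max_of_lt_left (rank_lt e a i)) (lt_max_of_lt_right (rank_lt f b j))

/-- The truth value `‖u ∈ v‖ = ⨆_{x ∈ dom v} (v(x) ⊓ ‖x ≈ u‖)` of membership. -/
noncomputable def memVal (u v : HName A) : A :=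
  ⨆ j : v.ι, v.val j ⊓ eqVal (v.elts j) u

end HName


/-- Terms of the first-order language of set theory expanded with all `A`-names
as constants: variables (de Bruijn indices) and names. -/
inductive Tm (A : Type u) (n : Nat) : Type (u + 1) where
  | var (i : Fin n) : Tm A n
  | name (u : HName A) : Tm A n

/-- Formulas of the first-order language with binary predicates `∈` and `≈`,
connectives `∧`, `∨`, `→`, `¬` and quantifiers `∃`, `∀`, with `A`-names as
constants; `Fml A n` are the formulas with free variables among `n` de Bruijn
indices, and the quantifiers bind the last variable of the context. -/
inductive Fml (A : Type u) : Nat → Type (u + 1) where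
  | mem {n} (t s : Tm A n) : Fml A n
  | eq {n} (t s : Tm A n) : Fml A n
  | and {n} (phi psi : Fml A n) : Fml A n
  | or {n} (phi psi : Fml A n) : Fml A n
  | imp {n} (phi psi : Fml A n) : Fml A n
  | neg {n} (phi : Fml A n) : Fml A n
  | ex {n} (phi : Fml A (n + 1)) : Fml A n
  | all {n} (phi : Fml A (n + 1)) : Fml A n

variable {A : Type u}

/-- Evaluation of a term under an assignment of names to the free variables. -/
def Tm.eval {n : Nat} : Tm A n → (Fin n → HName A) → HName A
  | var i, rho => rho i
  | name u, _ => u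

/-- Renaming (in particular, weakening) of the free variables of a term. -/
def Tm.rename {n m : Nat} (f : Fin n → Fin m) : Tm A n → Tm A m
  | var i => var (f i)
  | name u => name u

/-- Renaming (in particular, weakening) of the free variables of a formula. -/
def Fml.rename : {n m : Nat} → (Fin n → Fin m) → Fml A n → Fml A m
  | _, _, f, mem t s => mem (t.rename f) (s.rename f)
  | _, _, f, eq t s => eq (t.rename f) (s.rename f)
  | _, _, f, and phi psi => and (phi.rename f) (psi.rename f)
  | _, _, f, or phi psi => or (phi.rename f) (psi.rename f)
  | _, _, f, imp phi psi => imp (phi.rename f) (psi.rename f)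
  | _, _, f, neg phi => neg (phi.rename f)
  | _, _, f, ex phi => ex (phi.rename (Fin.snoc (Fin.castSucc ∘ f) (Fin.last _)))
  | _, _, f, all phi => all (phi.rename (Fin.snoc (Fin.castSucc ∘ f) (Fin.last _)))

/-- `φ ↔ ψ` abbreviates `(φ → ψ) ∧ (ψ → φ)`. -/
def Fml.iff {n : Nat} (phi psi : Fml A n) : Fml A n :=
  .and (.imp phi psi) (.imp psi phi)

/-- A (complete) Fidel structure for `C_ω` over the complete Heyting algebra
`A`: for each `x ∈ A`, `N x` is a nonempty set of "possible negations" of `x`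
such that `x ⊔ y = ⊤` for every `y ∈ N x` and, for every `y ∈ N x`, there is
`z ∈ N y` with `z ≤ x`. -/
def IsFidel [Order.Frame A] (N : A → Set A) : Prop :=
  ∀ x : A, (N x).Nonempty ∧ (∀ y ∈ N x, x ⊔ y = ⊤) ∧ ∀ y ∈ N x, ∃ z ∈ N y, z ≤ x

/-- A Leibniz truth-value interpretation on the `A`-names over the complete
`C_ω`-structure `⟨A, N⟩`: a map assigning to every formula (with names as
constants) and every assignment of names to its free variables a truth value in
`A`, satisfying the atomic clauses for `∈` and `≈`, the compositional clauses
for `∧`, `∨`, `→`, `∃`, `∀`, the clauses `‖¬φ‖ ∈ N ‖φ‖` and `‖¬¬φ‖ ≤ ‖φ‖` for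
the paraconsistent negation, and Leibniz law `‖u ≈ v‖ ≤ ‖φ(u) → φ(v)‖` for
every formula `φ(x)` with one free variable and all names `u`, `v`. -/
structure Interp (A : Type u) [Order.Frame A] (N : A → Set A) : Type (u + 1) where
  val : {n : Nat} → Fml A n → (Fin n → HName A) → A
  val_mem : ∀ {n} (t s : Tm A n) (rho : Fin n → HName A),
    val (.mem t s) rho = HName.memVal (t.eval rho) (s.eval rho)
  val_eq : ∀ {n} (t s : Tm A n) (rho : Fin n → HName A),
    val (.eq t s) rho = HName.eqVal (t.eval rho) (s.eval rho)
  val_and : ∀ {n} (phi psi : Fml A n) (rho : Fin n → HName A),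
    val (.and phi psi) rho = val phi rho ⊓ val psi rho
  val_or : ∀ {n} (phi psi : Fml A n) (rho : Fin n → HName A),
    val (.or phi psi) rho = val phi rho ⊔ val psi rho
  val_imp : ∀ {n} (phi psi : Fml A n) (rho : Fin n → HName A),
    val (.imp phi psi) rho = val phi rho ⇨ val psi rho
  val_ex : ∀ {n} (phi : Fml A (n + 1)) (rho : Fin n → HName A),
    val (.ex phi) rho = ⨆ u : HName A, val phi (Fin.snoc rho u)
  val_all : ∀ {n} (phi : Fml A (n + 1)) (rho : Fin n → HName A),
    val (.all phi) rho = ⨅ u : HName A, val phi (Fin.snoc rho u)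
  val_neg : ∀ {n} (phi : Fml A n) (rho : Fin n → HName A),
    val (.neg phi) rho ∈ N (val phi rho)
  val_negneg : ∀ {n} (phi : Fml A n) (rho : Fin n → HName A),
    val (.neg (.neg phi)) rho ≤ val phi rho
  leibniz : ∀ (phi : Fml A 1) (u v : HName A),
    HName.eqVal u v ≤ val phi (fun _ => u) ⇨ val phi (fun _ => v)


/-- `A` is refinable if every subset `S` of `A` is refined by an antichain `B`
(every element of `B` lies below some element of `S`) with `⨆B = ⨆S`. -/
def Refinable (A : Type u) [Order.Frame A] : Prop :=
  ∀ S : Set A, ∃ B : Set A, (∀ b ∈ B, ∃ a ∈ S, b ≤ a) ∧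
    (∀ b ∈ B, ∀ b' ∈ B, b ≠ b' → b ⊓ b' = ⊥) ∧ sSup B = sSup S

/-!
Refine the values `‖ψ(u)‖` to an antichain `B` with `⨆ B = ⊤` and pick for each `b ∈ B` a
witness `u_b` with `b ≤ ‖ψ(u_b)‖`. Mixing the `u_b` along `B` gives one name `u` with
`b ≤ ‖u_b ≈ u‖` (disjointness kills the cross terms), so Leibniz law yields `b ≤ ‖ψ(u)‖`
for every `b`, hence `‖ψ(u)‖ = ⊤`.
-/

open Function

namespace HName

variable [Order.Frame A]

theorem eqVal_def (u v : HName A) :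
    eqVal u v = (⨅ i, u.val i ⇨ memVal (u.elts i) v) ⊓
      (⨅ j, v.val j ⇨ memVal (v.elts j) u) := by
  cases u
  cases v
  rw [eqVal]
  rfl

theorem eqVal_self (u : HName A) : eqVal u u = ⊤ := by
  induction u with
  | mk ι e a ih =>
    have hmem : ∀ i, a i ≤ memVal (e i) (mk ι e a) := fun i =>
      le_iSup_of_le (f := fun j => a j ⊓ eqVal (e j) (e i)) i (by simp [ih i])
    rw [eqVal_def, eq_top_iff]
    exact le_inf (le_iInf fun i => le_himp_iff.2 (inf_le_right.trans (hmem i)))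
      (le_iInf fun i => le_himp_iff.2 (inf_le_right.trans (hmem i)))

theorem val_le_memVal_self (u : HName A) (i : u.ι) : u.val i ≤ memVal (u.elts i) u :=
  le_iSup_of_le i (by rw [eqVal_self, inf_top_eq])

/-- The name `⨆ₖ wₖ · fₖ`: the union of the names `f k`, each member of `f k` weighted
by `w k`. -/
def mixture {κ : Type u} (w : κ → A) (f : κ → HName A) : HName A :=
  mk (Σ k, (f k).ι) (fun p => (f p.1).elts p.2) (fun p => w p.1 ⊓ (f p.1).val p.2)

theorem le_eqVal_mixture {κ : Type u} {w : κ → A} (hw : Pairwise (Disjoint on w))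
    (f : κ → HName A) (k : κ) : w k ≤ eqVal (f k) (mixture w f) := by
  rw [eqVal_def]
  refine le_inf (le_iInf fun i => le_himp_iff.2 ?_) (le_iInf fun ⟨k', j⟩ => le_himp_iff.2 ?_)
  · refine le_iSup_of_le (⟨k, i⟩ : Σ k, (f k).ι) ?_
    change w k ⊓ (f k).val i ≤ (w k ⊓ (f k).val i) ⊓ eqVal ((f k).elts i) ((f k).elts i)
    rw [eqVal_self, inf_top_eq]
  · change w k ⊓ (w k' ⊓ (f k').val j) ≤ memVal ((f k').elts j) (f k)
    rcases eq_or_ne k k' with rfl | hkk'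
    · exact inf_le_right.trans (inf_le_right.trans (val_le_memVal_self (f k) j))
    · calc w k ⊓ (w k' ⊓ (f k').val j) ≤ w k ⊓ w k' := inf_le_inf_left _ inf_le_left
        _ = ⊥ := (hw hkk').eq_bot
        _ ≤ _ := bot_le

end HName

namespace Interp

variable [Order.Frame A] {N : A → Set A} (I : Interp A N)

theorem val_ex_of_closed (psi : Fml A 1) :
    I.val (.ex psi) (fun i => i.elim0) = ⨆ u : HName A, I.val psi (fun _ => u) := by
  rw [I.val_ex]
  congr!

theorem le_val_of_le_eqVal (psi : Fml A 1) {a : A} {u v : HName A}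
    (hu : a ≤ I.val psi (fun _ => u)) (huv : a ≤ HName.eqVal u v) :
    a ≤ I.val psi (fun _ => v) :=
  (le_inf hu (huv.trans (I.leibniz psi u v))).trans inf_himp_le

theorem le_val_mixture (psi : Fml A 1) {κ : Type u} {w : κ → A}
    (hw : Pairwise (Disjoint on w)) {f : κ → HName A}
    (hf : ∀ k, w k ≤ I.val psi (fun _ => f k)) (k : κ) :
    w k ≤ I.val psi (fun _ => HName.mixture w f) :=
  I.le_val_of_le_eqVal psi (hf k) (HName.le_eqVal_mixture hw f k)

end Interp

theorem maximality_principle_general {A : Type u} [Order.Frame A] {N : A → Set A}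
    (hA : Refinable A) (I : Interp A N) (psi : Fml A 1)
    (h : I.val (.ex psi) (fun i => i.elim0) = ⊤) :
    ∃ u : HName A, I.val psi (fun _ => u) = ⊤ := by
  obtain ⟨B, hBS, hB, hBsup⟩ := hA (Set.range fun u : HName A => I.val psi (fun _ => u))
  have hw : Pairwise (Disjoint on fun b : B => (b : A)) := fun b b' hbb' =>
    disjoint_iff.2 (hB b b.2 b' b'.2 (Subtype.coe_ne_coe.2 hbb'))
  have hwitness : ∀ b : B, ∃ u : HName A, (b : A) ≤ I.val psi (fun _ => u) := by
    rintro ⟨b, hb⟩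
    obtain ⟨_, ⟨u, rfl⟩, hbu⟩ := hBS b hb
    exact ⟨u, hbu⟩
  choose f hf using hwitness
  refine ⟨HName.mixture (fun b : B => (b : A)) f, eq_top_iff.2 ?_⟩
  calc (⊤ : A) = ⨆ b : B, (b : A) := by
        rw [← sSup_eq_iSup', hBsup, sSup_range, ← I.val_ex_of_closed, h]
    _ ≤ _ := iSup_le (I.le_val_mixture psi hw hf)

/-- Maximality principle: over a complete `C_ω`-structure `⟨A, N⟩` whose
underlying complete Heyting algebra is refinable, for any Leibniz truth-value
interpretation `‖·‖`, if `‖∃x ψ(x)‖ = 1` for a formula `ψ(x)` with one free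
variable, then there is a name `u` with `‖ψ(u)‖ = 1`. -/
theorem maximality_principle {A : Type u} [Order.Frame A] {N : A → Set A}
    (hN : IsFidel N) (hA : Refinable A) (I : Interp A N) (psi : Fml A 1)
    (h : I.val (.ex psi) (fun i => i.elim0) = ⊤) :
    ∃ u : HName A, I.val psi (fun _ => u) = ⊤ :=
  maximality_principle_general hA I psi h
end

section
/- Failure of Comprehension: for every complete Heyting algebra A with 0 ≠ 1, the truth value of the sentence asserting the existence of a universal set is zero in the name universe: ‖∃x∀y(y ∈ x)‖ = 0, i.e. ⨆_{u ∈ V^A} ⨅_{v ∈ V^A} ‖v ∈ u‖ = 0; hence the unrestricted Comprehension scheme is not valid in V^A. -/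
universe u

/-!
Russell's paradox inside `V^A`. Given a name `u` and `c : A`, let `r` have the same domain as `u`,
with `r(x) = c ⊓ ¬‖x ∈ x‖`. Substitutivity of `≈` gives `‖r ∈ r‖ = ⊥` and `c ⊓ ‖r ∈ u‖ ≤ ‖r ∈ r‖`.
Taking `c = ⨅ v, ‖v ∈ u‖ ≤ ‖r ∈ u‖` shows `c = ⊥`.

Substitutivity rests on transitivity of `≈`, proved by recursion on the largest rank of the three
names: unfolding `‖x ≈ y‖ ⊓ ‖y ≈ z‖` twice only meets triples of members, all of strictly smaller rank.
-/

namespace HName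

variable {A : Type u} [Order.Frame A]

theorem eqVal_mk {ι κ : Type u} (e : ι → HName A) (a : ι → A) (f : κ → HName A) (b : κ → A) :
    eqVal (mk ι e a) (mk κ f b) =
      (⨅ i, a i ⇨ memVal (e i) (mk κ f b)) ⊓ ⨅ j, b j ⇨ memVal (f j) (mk ι e a) := by
  rw [eqVal]; rfl

theorem memVal_mk {κ : Type u} (x : HName A) (f : κ → HName A) (b : κ → A) :
    memVal x (mk κ f b) = ⨆ j, b j ⊓ eqVal (f j) x := rfl

theorem eqVal_comm (x y : HName A) : eqVal x y = eqVal y x := by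
  obtain ⟨ι, e, a⟩ := x
  obtain ⟨κ, f, b⟩ := y
  rw [eqVal_mk, eqVal_mk, inf_comm]

theorem inf_le_memVal_of_eqVal {ι : Type u} {e : ι → HName A} {a : ι → A} (y : HName A)
    (i : ι) : eqVal (mk ι e a) y ⊓ a i ≤ memVal (e i) y := by
  obtain ⟨κ, f, b⟩ := y
  rw [← le_himp_iff, eqVal_mk]
  exact inf_le_of_left_le (iInf_le _ i)

/-- Transitivity is assumed only on members, so that this serves both inside the recursion
proving `eqVal_trans` and after it. -/
theorem eqVal_inf_memVal_le_of_trans {κ μ : Type u} {f : κ → HName A} {b : κ → A}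
    {g : μ → HName A} {c : μ → A} {x : HName A}
    (htrans : ∀ j k, eqVal (g k) (f j) ⊓ eqVal (f j) x ≤ eqVal (g k) x) :
    eqVal (mk κ f b) (mk μ g c) ⊓ memVal x (mk κ f b) ≤ memVal x (mk μ g c) := by
  rw [memVal_mk, inf_iSup_eq]
  refine iSup_le fun j => ?_
  calc eqVal (mk κ f b) (mk μ g c) ⊓ (b j ⊓ eqVal (f j) x)
      ≤ memVal (f j) (mk μ g c) ⊓ eqVal (f j) x := by
        rw [← inf_assoc]; exact inf_le_inf_right _ (inf_le_memVal_of_eqVal _ j)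
    _ = ⨆ k, c k ⊓ (eqVal (g k) (f j) ⊓ eqVal (f j) x) := by
        simp only [memVal_mk, iSup_inf_eq, inf_assoc]
    _ ≤ memVal x (mk μ g c) := iSup_mono fun k => inf_le_inf_left _ (htrans j k)

theorem eqVal_trans : ∀ x y z : HName A, eqVal x y ⊓ eqVal y z ≤ eqVal x z
  | mk ι e a, mk κ f b, mk μ g c => by
    rw [eqVal_mk e a g c, le_inf_iff]
    constructor
    · refine le_iInf fun i => le_himp_iff.2 ?_
      calc eqVal (mk ι e a) (mk κ f b) ⊓ eqVal (mk κ f b) (mk μ g c) ⊓ a i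
          ≤ eqVal (mk κ f b) (mk μ g c) ⊓ memVal (e i) (mk κ f b) := by
            rw [inf_right_comm, inf_comm]
            exact inf_le_inf_left _ (inf_le_memVal_of_eqVal _ i)
        _ ≤ memVal (e i) (mk μ g c) :=
            eqVal_inf_memVal_le_of_trans fun j k => eqVal_trans (g k) (f j) (e i)
    · refine le_iInf fun k => le_himp_iff.2 ?_
      calc eqVal (mk ι e a) (mk κ f b) ⊓ eqVal (mk κ f b) (mk μ g c) ⊓ c k
          ≤ eqVal (mk κ f b) (mk ι e a) ⊓ memVal (g k) (mk κ f b) := by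
            rw [inf_assoc, eqVal_comm (mk ι e a)]
            refine inf_le_inf_left _ ?_
            rw [eqVal_comm]
            exact inf_le_memVal_of_eqVal _ k
        _ ≤ memVal (g k) (mk ι e a) :=
            eqVal_inf_memVal_le_of_trans fun j i => eqVal_trans (e i) (f j) (g k)
termination_by x y z => max (max x.rank y.rank) z.rank
decreasing_by
  all_goals
    refine max_lt (max_lt ?_ ?_) ?_ <;> simp only [lt_max_iff, rank_lt, true_or, or_true]

theorem eqVal_inf_memVal_left_le (x y z : HName A) : eqVal x y ⊓ memVal x z ≤ memVal y z := by
  obtain ⟨μ, g, c⟩ := z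
  rw [memVal_mk, memVal_mk, inf_iSup_eq]
  refine iSup_mono fun k => ?_
  rw [inf_left_comm, inf_comm (eqVal x y)]
  exact inf_le_inf_left _ (eqVal_trans _ _ _)

theorem eqVal_inf_memVal_right_le (x y z : HName A) : eqVal x y ⊓ memVal z x ≤ memVal z y := by
  obtain ⟨κ, f, b⟩ := x
  obtain ⟨μ, g, c⟩ := y
  exact eqVal_inf_memVal_le_of_trans fun _ _ => eqVal_trans _ _ _

theorem eqVal_inf_memVal_self_le (x y : HName A) : eqVal x y ⊓ memVal x x ≤ memVal y y :=
  calc eqVal x y ⊓ memVal x x ≤ eqVal x y ⊓ memVal y x :=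
        le_inf inf_le_left (eqVal_inf_memVal_left_le x y x)
    _ ≤ memVal y y := eqVal_inf_memVal_right_le x y y

noncomputable def russell (u : HName A) (c : A) : HName A :=
  mk u.ι u.elts fun i => c ⊓ (memVal (u.elts i) (u.elts i))ᶜ

theorem memVal_russell_self (u : HName A) (c : A) :
    memVal (russell u c) (russell u c) = ⊥ := by
  set r := russell u c
  refine le_compl_self.1 (iSup_le fun i => ?_)
  have hself : eqVal (u.elts i) r ⊓ memVal r r ≤ memVal (u.elts i) (u.elts i) := by
    rw [eqVal_comm]
    exact eqVal_inf_memVal_self_le _ _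
  rw [le_compl_iff_disjoint_right, disjoint_iff_inf_le, inf_assoc]
  calc (c ⊓ (memVal (u.elts i) (u.elts i))ᶜ) ⊓ (eqVal (u.elts i) r ⊓ memVal r r)
      ≤ (memVal (u.elts i) (u.elts i))ᶜ ⊓ memVal (u.elts i) (u.elts i) :=
        inf_le_inf inf_le_right hself
    _ = ⊥ := compl_inf_self _

theorem inf_memVal_russell (u : HName A) (c : A) : c ⊓ memVal (russell u c) u = ⊥ := by
  set r := russell u c
  rw [← le_bot_iff, ← memVal_russell_self u c, memVal, inf_iSup_eq]
  refine iSup_mono fun i => ?_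
  have hcompl : c ⊓ eqVal (u.elts i) r ≤ (memVal (u.elts i) (u.elts i))ᶜ := by
    rw [le_compl_iff_disjoint_right, disjoint_iff_inf_le, ← memVal_russell_self u c]
    exact (inf_le_inf_right _ inf_le_right).trans (eqVal_inf_memVal_self_le _ _)
  calc c ⊓ (u.val i ⊓ eqVal (u.elts i) r) ≤ c ⊓ eqVal (u.elts i) r :=
        inf_le_inf_left _ inf_le_right
    _ ≤ (c ⊓ (memVal (u.elts i) (u.elts i))ᶜ) ⊓ eqVal (u.elts i) r :=
        le_inf (le_inf inf_le_left hcompl) inf_le_right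

theorem iInf_memVal_eq_bot (u : HName A) : ⨅ v : HName A, memVal v u = ⊥ :=
  le_bot_iff.1 <| calc
    ⨅ v, memVal v u ≤ (⨅ v, memVal v u) ⊓ memVal (russell u (⨅ v, memVal v u)) u :=
        le_inf le_rfl (iInf_le _ _)
    _ = ⊥ := inf_memVal_russell u _

end HName

open HName in
/-- Failure of Comprehension: for every complete Heyting algebra `A` with `0 ≠ 1`,
the truth value `‖∃x∀y(y ∈ x)‖ = ⨆_{u ∈ V^A} ⨅_{v ∈ V^A} ‖v ∈ u‖` of the sentence
asserting the existence of a universal set is `0`; hence the unrestricted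
Comprehension scheme is not valid in `V^A`. -/
theorem comprehension_fails {A : Type u} [Order.Frame A] (h : (⊥ : A) ≠ ⊤) :
    (⨆ u : HName A, ⨅ v : HName A, memVal v u) = ⊥ ∧
      (⨆ u : HName A, ⨅ v : HName A, memVal v u) ≠ ⊤ := by
  have hbot : (⨆ u : HName A, ⨅ v : HName A, memVal v u) = ⊥ := by
    simp only [iInf_memVal_eq_bot, iSup_bot]
  exact ⟨hbot, hbot ▸ h⟩
end
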